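/- Let β∈(1/2,1), k=p^{1−β}, k log(p)/n→0, r_{np}=(φ(β)+δ_0)√(k log(p)/n) with δ_0>0 small, T_p=√(log p), u=2φ(β) if β∈(1/2,3/4] and u=√2 if β∈(3/4,1), ũ=u(1+δ) and ρ̃_j=(1−δ)√n|θ_j| with δ=δ_{np}→0. Then there exists η>0 such that for n,p large enough, inf over θ∈Θ̃^{(3)}_k(r_{np}) of Σ_{j=1}^k Φ(−ũT_p+ρ̃_j)/√(2pΦ(−uT_p)) > p^η (this infimum is asymptotically equivalent to the infimum of E_θ(L̃_1(u))). -/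

import Mathlib

open Filter Asymptotics

noncomputable section

/-- Standard Gaussian density. -/
def gaussPDF (x : ℝ) : ℝ := Real.exp (-(x ^ 2) / 2) / Real.sqrt (2 * Real.pi)

/-- Standard Gaussian cdf `Φ`. -/
def gaussCDF (x : ℝ) : ℝ := ∫ t in Set.Iic x, gaussPDF t

/-- Euclidean norm of a finite vector. -/
def vnorm {m : ℕ} (v : Fin m → ℝ) : ℝ := Real.sqrt (∑ i, v i ^ 2)

/-- Sup-norm of a finite vector. -/
def vnormInf {m : ℕ} (v : Fin m → ℝ) : ℝ := ⨆ j, |v j|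

open Classical in
/-- Number of nonzero coordinates of `θ`. -/
def suppCard {m : ℕ} (θ : Fin m → ℝ) : ℕ := (Finset.univ.filter fun j => θ j ≠ 0).card

/-- The function `φ(β)` describing the sharp detection boundary. -/
def phiFn (β : ℝ) : ℝ :=
  if β ≤ 3 / 4 then Real.sqrt (2 * β - 1) else Real.sqrt 2 * (1 - Real.sqrt (1 - β))

/-- The constant `u`: `u = 2φ(β)` for `β ∈ (1/2, 3/4]` and `u = √2` for `β ∈ (3/4, 1)`. -/
def uConst (β : ℝ) : ℝ := if β ≤ 3 / 4 then 2 * phiFn β else Real.sqrt 2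

/-- The set `Θ̃^{(3)}_k(r)`: `k`-sparse vectors with `‖θ‖ ≥ r`, `‖θ‖² < 4k log(p)/n`
and `‖θ‖_∞² < 4 log(p)/n`. -/
def Theta3 (n p k : ℕ) (r : ℝ) : Set (Fin p → ℝ) :=
  {θ | suppCard θ ≤ k ∧ r ≤ vnorm θ} ∩
    {θ | vnorm θ ^ 2 < 4 * (k : ℝ) * Real.log p / n} ∩
    {θ | vnormInf θ ^ 2 < 4 * Real.log p / n}

/-!
Write `φ = phiFn β`, `u = uConst β`, `T = √(log p)` and fix `φ < a < min u (φ + δ₀)`. Since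
`‖θ‖² ≥ (φ + δ₀)² k log p / n` while every coordinate has `θ_j² < 4 log p / n`, at least
`((φ + δ₀)² - a²) k / 4` coordinates satisfy `√n |θ_j| ≥ a T`. Each of them contributes at least
`Φ(-(u - a + o(1)) T) ≥ p^(-(u - a)² / 2 - o(1))` to the numerator, and Chernoff's bound makes the
denominator at most `p^((1 - u² / 2) / 2)`. As `2 (1 - β) = (u - φ)² + 1 - u² / 2`, the ratio is
at least `p^(((u - φ)² - (u - a)²) / 2 - o(1))`, so `η = ((u - φ)² - (u - a)²) / 4` works.
-/

section Gaussian

open MeasureTheory ProbabilityTheory Real Set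

lemma gaussPDF_eq_gaussianPDFReal : gaussPDF = gaussianPDFReal 0 1 := by
  ext x
  simp [gaussPDF, gaussianPDFReal, div_eq_inv_mul]

lemma gaussCDF_eq_measureReal (x : ℝ) : gaussCDF x = (gaussianReal 0 1).real (Iic x) := by
  rw [measureReal_def, gaussianReal_apply_eq_integral _ one_ne_zero, gaussCDF,
    gaussPDF_eq_gaussianPDFReal, ENNReal.toReal_ofReal]
  exact setIntegral_nonneg measurableSet_Iic fun t _ => gaussianPDFReal_nonneg _ _ t

lemma gaussCDF_mono : Monotone gaussCDF := fun x y hxy => by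
  simp only [gaussCDF_eq_measureReal]
  exact measureReal_mono (Iic_subset_Iic.2 hxy)

lemma gaussCDF_nonneg (x : ℝ) : 0 ≤ gaussCDF x := by
  rw [gaussCDF_eq_measureReal]
  exact measureReal_nonneg

lemma gaussCDF_neg_le_exp {x : ℝ} (hx : 0 ≤ x) : gaussCDF (-x) ≤ exp (-(x ^ 2) / 2) := by
  have h := measure_le_le_exp_mul_mgf (μ := gaussianReal 0 1) (X := id) (-x) (neg_nonpos.2 hx)
    (integrable_exp_mul_gaussianReal (-x))
  rw [mgf_id_gaussianReal, ← exp_add] at h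
  rw [gaussCDF_eq_measureReal]
  refine h.trans_eq (congrArg exp ?_)
  simp only [NNReal.coe_one]
  ring

lemma gaussPDF_add_one_le_gaussCDF_neg {x : ℝ} (hx : 0 ≤ x) :
    gaussPDF (x + 1) ≤ gaussCDF (-x) := by
  have hint : Integrable gaussPDF := gaussPDF_eq_gaussianPDFReal ▸ integrable_gaussianPDFReal 0 1
  have hpos (t : ℝ) : 0 ≤ gaussPDF t := by
    rw [gaussPDF_eq_gaussianPDFReal]; exact gaussianPDFReal_nonneg _ _ t
  calc gaussPDF (x + 1) = gaussPDF (x + 1) * volume.real (Icc (-x - 1) (-x)) := by simp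
    _ ≤ ∫ t in Icc (-x - 1) (-x), gaussPDF t := by
      refine setIntegral_ge_of_const_le_real measurableSet_Icc (by simp) (fun t ht => ?_)
        hint.integrableOn
      have : t ^ 2 ≤ (x + 1) ^ 2 := by nlinarith [ht.1, ht.2]
      unfold gaussPDF
      gcongr
    _ ≤ gaussCDF (-x) :=
      setIntegral_mono_set hint.integrableOn (Eventually.of_forall hpos)
        (Eventually.of_forall fun t ht => ht.2)

lemma gaussCDF_pos (x : ℝ) : 0 < gaussCDF x := by
  have hpdf : 0 < gaussPDF (|x| + 1) := by unfold gaussPDF; positivity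
  calc 0 < gaussCDF (-|x|) := hpdf.trans_le (gaussPDF_add_one_le_gaussCDF_neg (abs_nonneg x))
    _ ≤ gaussCDF x := gaussCDF_mono (neg_abs_le x)

end Gaussian

section DetectionBoundary

variable {β : ℝ}

lemma phiFn_pos (hβ : 1 / 2 < β) : 0 < phiFn β := by
  unfold phiFn
  split_ifs with h
  · exact Real.sqrt_pos.2 (by linarith)
  · have : Real.sqrt (1 - β) < 1 := (Real.sqrt_lt' one_pos).2 (by linarith)
    exact mul_pos (by positivity) (by linarith)

lemma phiFn_lt_uConst (hβ : 1 / 2 < β) (hβ1 : β < 1) : phiFn β < uConst β := by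
  have hφ := phiFn_pos hβ
  unfold uConst
  split_ifs with h
  · linarith
  · unfold phiFn
    rw [if_neg h]
    have : 0 < Real.sqrt (1 - β) := Real.sqrt_pos.2 (by linarith)
    nlinarith [Real.sqrt_pos.2 (show (0 : ℝ) < 2 by norm_num)]

lemma two_mul_one_sub_eq_uConst_sub_phiFn_sq (hβ : 1 / 2 ≤ β) (hβ1 : β ≤ 1) :
    2 * (1 - β) = (uConst β - phiFn β) ^ 2 + 1 - uConst β ^ 2 / 2 := by
  unfold uConst phiFn
  split_ifs
  · linear_combination Real.sq_sqrt (show 0 ≤ 2 * β - 1 by linarith)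
  · linear_combination (1 / 2 - Real.sqrt (1 - β) ^ 2) * Real.sq_sqrt (show (0 : ℝ) ≤ 2 by norm_num)
      - 2 * Real.sq_sqrt (show 0 ≤ 1 - β by linarith)

lemma exists_threshold_and_exponent (hβ : 1 / 2 < β) (hβ1 : β < 1) {δ₀ : ℝ} (hδ₀ : 0 < δ₀) :
    ∃ a η, 0 < a ∧ a < uConst β ∧ a < phiFn β + δ₀ ∧ 0 < η ∧
      η + (1 - uConst β ^ 2 / 2) / 2 + (uConst β - a) ^ 2 / 2 < 1 - β := by
  have hφ := phiFn_pos hβ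
  have hboundary := two_mul_one_sub_eq_uConst_sub_phiFn_sq hβ.le hβ1.le
  obtain ⟨a, hφa, hab⟩ :=
    exists_between (lt_min (phiFn_lt_uConst hβ hβ1) (lt_add_of_pos_right (phiFn β) hδ₀))
  obtain ⟨hau, haδ₀⟩ := lt_min_iff.1 hab
  have hη : 0 < ((uConst β - phiFn β) ^ 2 - (uConst β - a) ^ 2) / 4 := by
    nlinarith [mul_pos (sub_pos.2 hφa) (show 0 < 2 * uConst β - phiFn β - a by linarith)]
  exact ⟨a, _, hφ.trans hφa, hau, haδ₀, hη, by linarith⟩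

end DetectionBoundary

section Counting

open Finset

variable {ι : Type*} [Fintype ι]

lemma sum_sq_le_card_mul_add (θ : ι → ℝ) {τ M : ℝ} (hM : ∀ i, θ i ^ 2 ≤ M) :
    ∑ i, θ i ^ 2 ≤ #{i | τ ≤ |θ i|} * M + Fintype.card ι * τ ^ 2 := by
  rw [← sum_filter_add_sum_filter_not univ (fun i => τ ≤ |θ i|)]
  gcongr
  · simpa using sum_le_card_nsmul _ _ M fun i _ => hM i
  · calc ∑ i ∈ univ.filter (fun i => ¬τ ≤ |θ i|), θ i ^ 2
        ≤ #(univ.filter fun i => ¬τ ≤ |θ i|) * τ ^ 2 := by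
          refine (sum_le_card_nsmul _ _ _ fun i hi => ?_).trans_eq (nsmul_eq_mul _ _)
          rw [← sq_abs]
          exact pow_le_pow_left₀ (abs_nonneg _) (not_le.1 (mem_filter.1 hi).2).le 2
      _ ≤ Fintype.card ι * τ ^ 2 := by
          gcongr
          exact card_le_univ _

lemma card_mul_gaussCDF_le_sum (θ : ι → ℝ) {A : ℝ} (hA : 0 ≤ A) (B τ : ℝ) :
    #{i | τ ≤ |θ i|} * gaussCDF (B + A * τ) ≤ ∑ i, gaussCDF (B + A * |θ i|) := by
  calc #{i | τ ≤ |θ i|} * gaussCDF (B + A * τ)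
      ≤ ∑ i ∈ univ.filter (fun i => τ ≤ |θ i|), gaussCDF (B + A * |θ i|) := by
        rw [← nsmul_eq_mul]
        refine card_nsmul_le_sum _ _ _ fun i hi => gaussCDF_mono ?_
        gcongr
        exact (mem_filter.1 hi).2
    _ ≤ ∑ i, gaussCDF (B + A * |θ i|) :=
        sum_le_sum_of_subset_of_nonneg (subset_univ _) fun i _ _ => gaussCDF_nonneg _

lemma Fin.sum_castLE_of_eq_zero {M : Type*} [AddCommMonoid M] {k p : ℕ} (h : k ≤ p)
    (f : Fin p → M) (hf : ∀ l : Fin p, k ≤ l → f l = 0) :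
    ∑ j : Fin k, f (Fin.castLE h j) = ∑ i, f i := by
  refine (sum_map univ (Fin.castLEEmb h) f).symm.trans ?_
  refine sum_subset (subset_univ _) fun i _ hi => hf i ?_
  by_contra! hlt
  exact hi (mem_map.2 ⟨⟨i, hlt⟩, mem_univ _, rfl⟩)

end Counting

section Theta3

open Finset

variable {n p k : ℕ} {r : ℝ} {θ : Fin p → ℝ}

lemma pos_of_mem_Theta3 (hθ : θ ∈ Theta3 n p k r) : 0 < (n : ℝ) ∧ 0 < Real.log p := by
  have h : 0 < 4 * (k : ℝ) * Real.log p / n := (sq_nonneg _).trans_lt hθ.1.2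
  have hn : 0 < (n : ℝ) := (Nat.cast_nonneg n).lt_of_ne fun h0 => by simp [← h0] at h
  refine ⟨hn, pos_of_mul_pos_right ?_ (by positivity : (0 : ℝ) ≤ 4 * k)⟩
  exact (div_pos_iff_of_pos_right hn).1 h

lemma sq_lt_of_mem_Theta3 (hθ : θ ∈ Theta3 n p k r) (i : Fin p) :
    θ i ^ 2 < 4 * Real.log p / n := by
  have hi : |θ i| ≤ vnormInf θ :=
    le_ciSup (f := fun j => |θ j|) (Set.finite_range _).bddAbove i
  rw [← sq_abs]
  exact (pow_le_pow_left₀ (abs_nonneg _) hi 2).trans_lt hθ.2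

lemma sq_le_sum_sq_of_mem_Theta3 (hθ : θ ∈ Theta3 n p k r) (hr : 0 ≤ r) :
    r ^ 2 ≤ ∑ i, θ i ^ 2 := by
  have h := pow_le_pow_left₀ hr hθ.1.1.2 2
  rwa [vnorm, Real.sq_sqrt (sum_nonneg fun i _ => sq_nonneg _)] at h

end Theta3

open Finset in
lemma mul_gaussCDF_le_sum_of_mem_Theta3 {n p k : ℕ} (hkp : k ≤ p) {θ : Fin p → ℝ} {a b δ : ℝ}
    (hb : 0 ≤ b) (hδ : δ ≤ 1) (B : ℝ)
    (hθ : θ ∈ Theta3 n p k (b * Real.sqrt (k * Real.log p / n)))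
    (hzero : ∀ l : Fin p, k ≤ (l : ℕ) → θ l = 0) :
    (b ^ 2 - a ^ 2) / 4 * k * gaussCDF (B + (1 - δ) * a * Real.sqrt (Real.log p)) ≤
      ∑ j : Fin k, gaussCDF (B + (1 - δ) * Real.sqrt n * |θ (Fin.castLE hkp j)|) := by
  obtain ⟨hn, hL⟩ := pos_of_mem_Theta3 hθ
  set θ' : Fin k → ℝ := fun j => θ (Fin.castLE hkp j)
  set τ := a * Real.sqrt (Real.log p) / Real.sqrt n
  have hτ : (1 - δ) * Real.sqrt n * τ = (1 - δ) * a * Real.sqrt (Real.log p) := by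
    have : Real.sqrt n ≠ 0 := (Real.sqrt_pos.2 hn).ne'
    simp only [τ]
    field_simp
  have hτsq : τ ^ 2 = a ^ 2 * Real.log p / n := by
    rw [div_pow, mul_pow, Real.sq_sqrt hL.le, Real.sq_sqrt hn.le, mul_div_assoc]
  have hsum : ∑ j, θ' j ^ 2 = ∑ i, θ i ^ 2 :=
    Fin.sum_castLE_of_eq_zero hkp (fun i => θ i ^ 2) fun l hl => by simp [hzero l hl]
  have hcount : (b ^ 2 - a ^ 2) / 4 * k ≤ #{j | τ ≤ |θ' j|} := by
    have hnorm := sq_le_sum_sq_of_mem_Theta3 hθ (by positivity)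
    have hsplit := sum_sq_le_card_mul_add θ' (τ := τ) fun j => (sq_lt_of_mem_Theta3 hθ _).le
    rw [mul_pow, Real.sq_sqrt (by positivity)] at hnorm
    rw [hsum, Fintype.card_fin, hτsq] at hsplit
    refine le_of_mul_le_mul_right ?_ (div_pos hL hn)
    calc (b ^ 2 - a ^ 2) / 4 * k * (Real.log p / n)
        = (b ^ 2 * (k * Real.log p / n) - k * (a ^ 2 * Real.log p / n)) / 4 := by ring
      _ ≤ #{j | τ ≤ |θ' j|} * (4 * Real.log p / n) / 4 := by gcongr; linarith
      _ = #{j | τ ≤ |θ' j|} * (Real.log p / n) := by ring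
  calc (b ^ 2 - a ^ 2) / 4 * k * gaussCDF (B + (1 - δ) * a * Real.sqrt (Real.log p))
      ≤ #{j | τ ≤ |θ' j|} * gaussCDF (B + (1 - δ) * Real.sqrt n * τ) := by
        rw [hτ]
        exact mul_le_mul_of_nonneg_right hcount (gaussCDF_nonneg _)
    _ ≤ ∑ j, gaussCDF (B + (1 - δ) * Real.sqrt n * |θ' j|) :=
        card_mul_gaussCDF_le_sum θ' (by have := sub_nonneg.2 hδ; positivity) B τ

open Real in
lemma eventually_rpow_mul_sqrt_lt_mul_gaussPDF {α : Type*} {l : Filter α} {P w : α → ℝ}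
    {w₀ β c u η : ℝ} (hP : Tendsto P l atTop) (hw : Tendsto w l (nhds w₀)) (hc : 0 < c)
    (hη : η + (1 - u ^ 2 / 2) / 2 + w₀ ^ 2 / 2 < 1 - β) :
    ∀ᶠ ν in l, P ν ^ η * √(2 * P ν * exp (-(u * √(log (P ν))) ^ 2 / 2)) <
      c * P ν ^ (1 - β) * gaussPDF (w ν * √(log (P ν)) + 1) := by
  have hL : Tendsto (fun ν => log (P ν)) l atTop := tendsto_log_atTop.comp hP
  have hT : Tendsto (fun ν => (√(log (P ν)))⁻¹) l (nhds 0) :=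
    tendsto_inv_atTop_zero.comp (tendsto_sqrt_atTop.comp hL)
  have he : Tendsto (fun ν => 1 - β - η - (1 - u ^ 2 / 2) / 2 - (w ν + (√(log (P ν)))⁻¹) ^ 2 / 2)
      l (nhds (1 - β - η - (1 - u ^ 2 / 2) / 2 - w₀ ^ 2 / 2)) := by
    simpa using (((hw.add hT).pow 2).div_const 2).const_sub (1 - β - η - (1 - u ^ 2 / 2) / 2)
  filter_upwards [(hL.atTop_mul_pos (by linarith) he).eventually_gt_atTop
      (log 2 / 2 + log √(2 * π) - log c), hP.eventually_gt_atTop 0,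
    hL.eventually_gt_atTop 0] with ν hν hPν hLν
  rw [← log_lt_log_iff (by positivity) (by unfold gaussPDF; positivity), gaussPDF,
    log_mul (by positivity) (by positivity), log_mul (by positivity) (by positivity),
    log_rpow hPν, log_mul (by positivity) (by positivity), log_rpow hPν,
    log_div (by positivity) (by positivity), log_exp, log_sqrt (by positivity),
    log_mul (by positivity) (by positivity), log_mul (by positivity) (by positivity), log_exp]
  generalize log (P ν) = L at hν hLν ⊢
  have hT2 : √L ^ 2 = L := sq_sqrt hLν.le
  have hexponent : L * (1 - β - η - (1 - u ^ 2 / 2) / 2 - (w ν + (√L)⁻¹) ^ 2 / 2) =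
      (1 - β) * L - η * L - (1 - u ^ 2 / 2) * L / 2 - (w ν * √L + 1) ^ 2 / 2 := by
    field_simp
    rw [hT2]
    ring
  rw [mul_pow, hT2]
  linarith

theorem inf_expectation_lower_bound_general
    (n p k : ℕ → ℕ) (hp : Tendsto p atTop atTop)
    (hkp : ∀ ν, k ν ≤ p ν)
    (β : ℝ) (hβ : 1 / 2 < β) (hβ1 : β < 1)
    (hk : ∀ ν, (k ν : ℝ) = (p ν : ℝ) ^ (1 - β))
    (δ₀ : ℝ) (hδ₀ : 0 < δ₀)
    (δ : ℕ → ℝ) (hδ : Tendsto δ atTop (nhds 0)) :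
    ∃ η : ℝ, 0 < η ∧
      ∀ᶠ ν in atTop, ∀ θ : Fin (p ν) → ℝ,
        θ ∈ Theta3 (n ν) (p ν) (k ν)
          ((phiFn β + δ₀) * Real.sqrt ((k ν : ℝ) * Real.log (p ν) / (n ν))) →
        (∀ l : Fin (p ν), k ν ≤ (l : ℕ) → θ l = 0) →
        (p ν : ℝ) ^ η <
          (∑ j : Fin (k ν),
              gaussCDF (-(uConst β * (1 + δ ν)) * Real.sqrt (Real.log (p ν)) +
                (1 - δ ν) * Real.sqrt (n ν) * |θ (Fin.castLE (hkp ν) j)|)) /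
            Real.sqrt (2 * (p ν : ℝ) * gaussCDF (-(uConst β) * Real.sqrt (Real.log (p ν)))) := by
  obtain ⟨a, η, ha, hau, haδ₀, hη, hexponent⟩ := exists_threshold_and_exponent hβ hβ1 hδ₀
  have hw : Tendsto (fun ν => uConst β * (1 + δ ν) - (1 - δ ν) * a) atTop
      (nhds (uConst β - a)) := by
    simpa using ((hδ.const_add 1).const_mul (uConst β)).sub ((hδ.const_sub 1).mul_const a)
  have hc : 0 < ((phiFn β + δ₀) ^ 2 - a ^ 2) / 4 := by nlinarith
  refine ⟨η, hη, ?_⟩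
  filter_upwards [eventually_rpow_mul_sqrt_lt_mul_gaussPDF (tendsto_natCast_atTop_atTop.comp hp)
      hw hc hexponent, hw.eventually (eventually_ge_nhds (sub_pos.2 hau)),
    hδ.eventually (eventually_le_nhds one_pos), hp.eventually_gt_atTop 0]
    with ν hrate hw0 hδ1 hp0
  intro θ hθ hzero
  rw [lt_div_iff₀ (Real.sqrt_pos.2 (mul_pos (mul_pos two_pos (Nat.cast_pos.2 hp0))
    (gaussCDF_pos _)))]
  set T := Real.sqrt (Real.log (p ν))
  set w := uConst β * (1 + δ ν) - (1 - δ ν) * a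
  calc (p ν : ℝ) ^ η * Real.sqrt (2 * p ν * gaussCDF (-uConst β * T))
      ≤ (p ν : ℝ) ^ η * Real.sqrt (2 * p ν * Real.exp (-(uConst β * T) ^ 2 / 2)) := by
        rw [neg_mul]
        gcongr
        exact gaussCDF_neg_le_exp (mul_nonneg (ha.trans hau).le (Real.sqrt_nonneg _))
    _ < ((phiFn β + δ₀) ^ 2 - a ^ 2) / 4 * (p ν : ℝ) ^ (1 - β) * gaussPDF (w * T + 1) := hrate
    _ ≤ ((phiFn β + δ₀) ^ 2 - a ^ 2) / 4 * k ν *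
          gaussCDF (-(uConst β * (1 + δ ν)) * T + (1 - δ ν) * a * T) := by
        rw [hk, show -(uConst β * (1 + δ ν)) * T + (1 - δ ν) * a * T = -(w * T) by ring]
        exact mul_le_mul_of_nonneg_left
          (gaussPDF_add_one_le_gaussCDF_neg (mul_nonneg hw0 (Real.sqrt_nonneg _)))
          (mul_nonneg hc.le (by positivity))
    _ ≤ _ := mul_gaussCDF_le_sum_of_mem_Theta3 (hkp ν) (by linarith) hδ1 _ hθ hzero

/-- **Lemma.** With `T_p = √(log p)`, `ũ = u(1+δ)`, `ρ̃_j = (1-δ)√n |θ_j|`, `δ → 0`,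
and `r = (φ(β)+δ₀)√(k log(p)/n)`, there exists `η > 0` such that for `n, p` large
enough, uniformly over `θ ∈ Θ̃^{(3)}_k(r)` (supported on the first `k` coordinates),
`Σ_{j=1}^k Φ(-ũT_p + ρ̃_j) / √(2pΦ(-uT_p)) > p^η`. -/
theorem inf_expectation_lower_bound
    (n p k : ℕ → ℕ) (hn : Tendsto n atTop atTop) (hp : Tendsto p atTop atTop)
    (hkp : ∀ ν, k ν ≤ p ν)
    (β : ℝ) (hβ : 1 / 2 < β) (hβ1 : β < 1)
    (hk : ∀ ν, (k ν : ℝ) = (p ν : ℝ) ^ (1 - β))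
    (hklogp : Tendsto (fun ν => (k ν : ℝ) * Real.log (p ν) / (n ν)) atTop (nhds 0))
    (δ₀ : ℝ) (hδ₀ : 0 < δ₀)
    (δ : ℕ → ℝ) (hδpos : ∀ ν, 0 < δ ν) (hδ : Tendsto δ atTop (nhds 0)) :
    ∃ η : ℝ, 0 < η ∧
      ∀ᶠ ν in atTop, ∀ θ : Fin (p ν) → ℝ,
        θ ∈ Theta3 (n ν) (p ν) (k ν)
          ((phiFn β + δ₀) * Real.sqrt ((k ν : ℝ) * Real.log (p ν) / (n ν))) →
        (∀ l : Fin (p ν), k ν ≤ (l : ℕ) → θ l = 0) →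
        (p ν : ℝ) ^ η <
          (∑ j : Fin (k ν),
              gaussCDF (-(uConst β * (1 + δ ν)) * Real.sqrt (Real.log (p ν)) +
                (1 - δ ν) * Real.sqrt (n ν) * |θ (Fin.castLE (hkp ν) j)|)) /
            Real.sqrt (2 * (p ν : ℝ) * gaussCDF (-(uConst β) * Real.sqrt (Real.log (p ν)))) :=
  inf_expectation_lower_bound_general n p k hp hkp β hβ hβ1 hk δ₀ hδ₀ δ hδ
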